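/- arXiv:2510.04202 — 2 statements merged into one kernel-verified Lean document; each statement's English description precedes it below -/
import Mathlib

section
/- Let A be a real m×n matrix whose largest singular value σ₁ is strictly greater than its second singular value, and let u₁ ∈ ℝ^m, v₁ ∈ ℝ^n be unit vectors with A v₁ = σ₁ u₁ and Aᵀ u₁ = σ₁ v₁. Then for any real m×n matrix B, the function η ↦ λ_max((A + ηB)ᵀ(A + ηB)) is differentiable at η = 0 with derivative 2 σ₁ · (u₁ᵀ B v₁); equivalently, ‖A + ηB‖₂² = σ₁² + 2η σ₁ (u₁ᵀ B v₁) + O(η²) to first order as η → 0. -/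
set_option maxHeartbeats 2000000

open Matrix

section Aux

lemma sq_le_dot {n : ℕ} (x : Fin n → ℝ) (i : Fin n) : x i ^ 2 ≤ x ⬝ᵥ x := by
  unfold dotProduct
  have := Finset.single_le_sum (f := fun j => x j * x j)
    (fun j _ => mul_self_nonneg (x j)) (Finset.mem_univ i)
  simpa [pow_two] using this

lemma dot_self_nonneg {n : ℕ} (x : Fin n → ℝ) : 0 ≤ x ⬝ᵥ x :=
  Finset.sum_nonneg fun i _ => mul_self_nonneg (x i)

lemma dot_aux {m n : ℕ} (M N : Matrix (Fin m) (Fin n) ℝ) (x y : Fin n → ℝ) :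
    x ⬝ᵥ (Mᵀ * N).mulVec y = M.mulVec x ⬝ᵥ N.mulVec y := by
  rw [← mulVec_mulVec, dotProduct_mulVec, vecMul_transpose]

lemma bilin_bound {n : ℕ} (M : Matrix (Fin n) (Fin n) ℝ) (x y : Fin n → ℝ)
    (a b : ℝ) (ha : 0 ≤ a) (hb : 0 ≤ b)
    (hx : ∀ i, |x i| ≤ a) (hy : ∀ j, |y j| ≤ b) :
    |x ⬝ᵥ M.mulVec y| ≤ (∑ i, ∑ j, |M i j|) * a * b := by
  unfold dotProduct mulVec
  calc |∑ i, x i * ∑ j, M i j * y j|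
      ≤ ∑ i, |x i * ∑ j, M i j * y j| := Finset.abs_sum_le_sum_abs _ _
    _ ≤ ∑ i, ∑ j, |M i j| * a * b := by
        apply Finset.sum_le_sum; intro i _
        rw [abs_mul]
        calc |x i| * |∑ j, M i j * y j| ≤ a * ∑ j, |M i j| * b := by
              apply mul_le_mul (hx i) ?_ (abs_nonneg _) ha
              calc |∑ j, M i j * y j| ≤ ∑ j, |M i j * y j| := Finset.abs_sum_le_sum_abs _ _
                _ ≤ ∑ j, |M i j| * b := by
                    apply Finset.sum_le_sum; intro j _
                    rw [abs_mul]
                    exact mul_le_mul_of_nonneg_left (hy j) (abs_nonneg _)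
          _ = ∑ j, |M i j| * a * b := by rw [Finset.mul_sum]; apply Finset.sum_congr rfl; intros; ring
    _ = (∑ i, ∑ j, |M i j|) * a * b := by
        rw [Finset.sum_mul, Finset.sum_mul]
        apply Finset.sum_congr rfl; intros; rw [Finset.sum_mul, Finset.sum_mul]

lemma expand_quad {n : ℕ} (M : Matrix (Fin n) (Fin n) ℝ) (w v₁ : Fin n → ℝ) (α : ℝ) :
    (w + α • v₁) ⬝ᵥ M.mulVec (w + α • v₁)
      = w ⬝ᵥ M.mulVec w + α * (v₁ ⬝ᵥ M.mulVec w) + α * (w ⬝ᵥ M.mulVec v₁)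
        + α ^ 2 * (v₁ ⬝ᵥ M.mulVec v₁) := by
  simp only [mulVec_add, mulVec_smul, dotProduct_add, add_dotProduct, dotProduct_smul,
    smul_dotProduct, smul_eq_mul]
  ring

end Aux


lemma gap_bound {n : ℕ} (S : Matrix (Fin n) (Fin n) ℝ) (hH : S.IsHermitian)
    (σsq : ℝ) (v₁ : Fin n → ℝ) (hv : v₁ ⬝ᵥ v₁ = 1) (hSv : S.mulVec v₁ = σsq • v₁)
    (i₀ : Fin n) (h0 : hH.eigenvalues i₀ = σsq)
    (hlt : ∀ i, i ≠ i₀ → hH.eigenvalues i < σsq) :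
    ∃ δ > 0, ∀ w : Fin n → ℝ, w ⬝ᵥ v₁ = 0 → w ⬝ᵥ S.mulVec w ≤ (σsq - δ) * (w ⬝ᵥ w) := by
  classical
  set U : Matrix (Fin n) (Fin n) ℝ := (hH.eigenvectorUnitary : Matrix (Fin n) (Fin n) ℝ) with hU
  set lam : Fin n → ℝ := hH.eigenvalues with hlam
  have hUU : star U * U = 1 := Unitary.star_mul_self_of_mem (hH.eigenvectorUnitary).2
  have hUU' : U * star U = 1 := Unitary.mul_star_self_of_mem (hH.eigenvectorUnitary).2
  have hspec : S = U * diagonal lam * star U := by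
    have := hH.spectral_theorem
    simpa using this
  -- coordinates
  set c : (Fin n → ℝ) → (Fin n → ℝ) := fun x => (star U).mulVec x with hc
  have hdot : ∀ x y : Fin n → ℝ, c x ⬝ᵥ c y = x ⬝ᵥ y := by
    intro x y
    rw [hc]
    rw [dotProduct_mulVec, ← mulVec_transpose]
    rw [mulVec_mulVec]
    have : (star U)ᵀ * star U = 1 := by
      have : (star U)ᵀ = U := by
        ext i j
        simp [star_apply, transpose_apply]
      rw [this, hUU']
    rw [this, one_mulVec]
  have hquad : ∀ x y : Fin n → ℝ, x ⬝ᵥ S.mulVec y = c x ⬝ᵥ (diagonal lam).mulVec (c y) := by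
    intro x y
    conv_lhs => rw [hspec]
    rw [← mulVec_mulVec, ← mulVec_mulVec]
    rw [dotProduct_mulVec (v := x), ← mulVec_transpose]
    have : Uᵀ = star U := by ext i j; simp [star_apply, transpose_apply]
    rw [this]
  -- eigen-coordinates of v₁
  have hcv : (diagonal lam).mulVec (c v₁) = σsq • c v₁ := by
    rw [hc]
    rw [mulVec_mulVec]
    have key : diagonal lam * star U = star U * S := by
      simp only [hspec, ← Matrix.mul_assoc, hUU, Matrix.one_mul]
    rw [key, ← mulVec_mulVec, hSv, mulVec_smul]
  have hcv1 : ∀ i, i ≠ i₀ → c v₁ i = 0 := by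
    intro i hi
    have := congrFun hcv i
    simp [mulVec_diagonal, Pi.smul_apply, smul_eq_mul] at this
    rcases this with h' | h'
    · exact absurd h' (hlt i hi).ne
    · exact h'
  -- δ
  obtain ⟨δ, hδpos, hδ⟩ : ∃ δ > 0, ∀ i, i ≠ i₀ → lam i ≤ σsq - δ := by
    by_cases hne : (Finset.univ.erase i₀ : Finset (Fin n)).Nonempty
    · refine ⟨σsq - (Finset.univ.erase i₀).sup' hne lam, ?_, ?_⟩
      · have : (Finset.univ.erase i₀).sup' hne lam < σsq := by
          rw [Finset.sup'_lt_iff]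
          intro i hi
          exact hlt i (Finset.ne_of_mem_erase hi)
        linarith
      · intro i hi
        have : lam i ≤ (Finset.univ.erase i₀).sup' hne lam :=
          Finset.le_sup' lam (Finset.mem_erase.mpr ⟨hi, Finset.mem_univ i⟩)
        linarith
    · refine ⟨1, one_pos, fun i hi => absurd ⟨i, Finset.mem_erase.mpr ⟨hi, Finset.mem_univ i⟩⟩ hne⟩
  refine ⟨δ, hδpos, fun w hw => ?_⟩
  -- coordinates of w
  have hw0 : c w i₀ = 0 := by
    have h1 : c w ⬝ᵥ c v₁ = 0 := by rw [hdot]; exact hw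
    have h2 : c w ⬝ᵥ c v₁ = c w i₀ * c v₁ i₀ := by
      unfold dotProduct
      rw [Finset.sum_eq_single i₀]
      · intro i _ hi; rw [hcv1 i hi, mul_zero]
      · intro h; exact absurd (Finset.mem_univ i₀) h
    have h3 : c v₁ i₀ * c v₁ i₀ = 1 := by
      have : c v₁ ⬝ᵥ c v₁ = 1 := by rw [hdot]; exact hv
      unfold dotProduct at this
      rw [Finset.sum_eq_single i₀] at this
      · exact this
      · intro i _ hi; rw [hcv1 i hi, mul_zero]
      · intro h; exact absurd (Finset.mem_univ i₀) h
    have h4 : c v₁ i₀ ≠ 0 := by intro h; rw [h, mul_zero] at h3; exact one_ne_zero h3.symm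
    rw [h2] at h1
    exact (mul_eq_zero.mp h1).resolve_right h4
  rw [hquad w w, ← hdot w w]
  unfold dotProduct
  rw [Finset.mul_sum]
  apply Finset.sum_le_sum
  intro i _
  have hm : (diagonal lam).mulVec (c w) i = lam i * c w i := by
    simp [mulVec_diagonal]
  rw [hm]
  by_cases hi : i = i₀
  · subst hi; rw [hw0]; ring_nf; rfl
  · have h1 : lam i ≤ σsq - δ := hδ i hi
    have h2 : 0 ≤ c w i * c w i := mul_self_nonneg _
    nlinarith


theorem lambdaMax_gram_hasDerivAt_of_simple_top_singular_value'
    {m n : ℕ} (A B : Matrix (Fin m) (Fin n) ℝ) (σ₁ : ℝ)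
    (u₁ : Fin m → ℝ) (v₁ : Fin n → ℝ)
    (hu : u₁ ⬝ᵥ u₁ = 1) (hv : v₁ ⬝ᵥ v₁ = 1)
    (hAv : A.mulVec v₁ = σ₁ • u₁) (hATu : Aᵀ.mulVec u₁ = σ₁ • v₁)
    (hσ : (⨆ v : { v : Fin n → ℝ // v ⬝ᵥ v = 1 },
        (v : Fin n → ℝ) ⬝ᵥ (Aᵀ * A).mulVec (v : Fin n → ℝ)) = σ₁ ^ 2)
    (hH : (Aᵀ * A).IsHermitian)
    (hsimple : ∃ i₀ : Fin n, hH.eigenvalues i₀ = σ₁ ^ 2 ∧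
      ∀ i : Fin n, i ≠ i₀ → hH.eigenvalues i < σ₁ ^ 2) :
    HasDerivAt (fun η : ℝ => ⨆ v : { v : Fin n → ℝ // v ⬝ᵥ v = 1 },
        (v : Fin n → ℝ) ⬝ᵥ ((A + η • B)ᵀ * (A + η • B)).mulVec (v : Fin n → ℝ))
      (2 * σ₁ * (u₁ ⬝ᵥ B.mulVec v₁)) 0 := by
  classical
  haveI : Nonempty { v : Fin n → ℝ // v ⬝ᵥ v = 1 } := ⟨⟨v₁, hv⟩⟩
  obtain ⟨i₀, h0, hlt⟩ := hsimple
  set c : ℝ := 2 * σ₁ * (u₁ ⬝ᵥ B.mulVec v₁) with hcdef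
  have hSymm : (Aᵀ * A)ᵀ = Aᵀ * A := by
    rw [transpose_mul, transpose_transpose]
  have hSv : (Aᵀ * A).mulVec v₁ = (σ₁ ^ 2) • v₁ := by
    rw [← mulVec_mulVec, hAv, mulVec_smul, hATu, smul_smul, pow_two]
  obtain ⟨δ, hδpos, hgap⟩ := gap_bound (Aᵀ * A) hH (σ₁ ^ 2) v₁ hv hSv i₀ h0 hlt
  set C : ℝ := ∑ i, ∑ j, |(Aᵀ * B) i j| with hCdef
  have hC0 : 0 ≤ C := Finset.sum_nonneg fun i _ => Finset.sum_nonneg fun j _ => abs_nonneg _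
  set C₂ : ℝ := ∑ i, ∑ j, |(Bᵀ * B) i j| with hC₂def
  have hC₂0 : 0 ≤ C₂ := Finset.sum_nonneg fun i _ => Finset.sum_nonneg fun j _ => abs_nonneg _
  set D₀ : ℝ := |c| / 2 + 3 * C with hD₀def
  have hD₀0 : 0 ≤ D₀ := by positivity
  set K : ℝ := D₀ ^ 2 / δ + C₂ with hKdef
  have hK0 : 0 ≤ K := by positivity
  clear_value c C C₂ D₀ K
  -- quadratic expansion of the Rayleigh quotient
  have hq : ∀ (η : ℝ) (v : Fin n → ℝ),
      v ⬝ᵥ ((A + η • B)ᵀ * (A + η • B)).mulVec v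
        = A.mulVec v ⬝ᵥ A.mulVec v + 2 * η * (A.mulVec v ⬝ᵥ B.mulVec v)
          + η ^ 2 * (B.mulVec v ⬝ᵥ B.mulVec v) := by
    intro η v
    rw [dot_aux, add_mulVec, smul_mulVec]
    simp only [dotProduct_add, add_dotProduct, dotProduct_smul, smul_dotProduct, smul_eq_mul]
    rw [dotProduct_comm (B.mulVec v) (A.mulVec v)]
    ring
  have hga1 : A.mulVec v₁ ⬝ᵥ A.mulVec v₁ = σ₁ ^ 2 := by
    rw [hAv]
    simp only [smul_dotProduct, dotProduct_smul, smul_eq_mul, hu]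
    ring
  have hhab1 : A.mulVec v₁ ⬝ᵥ B.mulVec v₁ = c / 2 := by
    rw [hAv]
    simp only [smul_dotProduct, smul_eq_mul, hcdef]
    ring
  have hgb1 : 0 ≤ B.mulVec v₁ ⬝ᵥ B.mulVec v₁ := dot_self_nonneg _
  -- per-vector upper bound
  have hub : ∀ (η : ℝ) (v : Fin n → ℝ), v ⬝ᵥ v = 1 →
      v ⬝ᵥ ((A + η • B)ᵀ * (A + η • B)).mulVec v ≤ σ₁ ^ 2 + η * c + K * η ^ 2 := by
    intro η v hv1
    rw [hq]
    set α : ℝ := v ⬝ᵥ v₁ with hα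
    set w : Fin n → ℝ := v - α • v₁ with hwdef
    have hwv1 : w ⬝ᵥ v₁ = 0 := by
      rw [hwdef, sub_dotProduct, smul_dotProduct, hv, smul_eq_mul, mul_one, sub_self]
    have hvw : v = w + α • v₁ := by rw [hwdef]; abel
    have hww : w ⬝ᵥ w = 1 - α ^ 2 := by
      have h' : v₁ ⬝ᵥ v = α := by rw [dotProduct_comm]
      simp only [hwdef, sub_dotProduct, dotProduct_sub, smul_dotProduct, dotProduct_smul,
        smul_eq_mul, hv, hv1, h', ← hα]
      ring
    set t : ℝ := Real.sqrt (w ⬝ᵥ w) with htdef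
    have ht0 : 0 ≤ t := Real.sqrt_nonneg _
    have ht2 : t ^ 2 = w ⬝ᵥ w := Real.sq_sqrt (dot_self_nonneg w)
    have hwi : ∀ i, |w i| ≤ t := by
      intro i
      rw [← Real.sqrt_sq_eq_abs, htdef]
      exact Real.sqrt_le_sqrt (sq_le_dot w i)
    clear_value α w t
    have hα2 : α ^ 2 = 1 - t ^ 2 := by rw [ht2, hww]; ring
    have ht1 : t ≤ 1 := by nlinarith [sq_nonneg α]
    have hαabs : |α| ≤ 1 := by
      rw [← Real.sqrt_sq_eq_abs]
      rw [show (1 : ℝ) = Real.sqrt 1 by rw [Real.sqrt_one]]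
      apply Real.sqrt_le_sqrt
      nlinarith [sq_nonneg t]
    have hv1i : ∀ i, |v₁ i| ≤ 1 := by
      intro i
      rw [← Real.sqrt_sq_eq_abs]
      rw [show (1 : ℝ) = Real.sqrt 1 by rw [Real.sqrt_one]]
      exact Real.sqrt_le_sqrt (by rw [← hv]; exact sq_le_dot v₁ i)
    -- bound on the A-part
    have h1 : A.mulVec v ⬝ᵥ A.mulVec v ≤ σ₁ ^ 2 - δ * t ^ 2 := by
      rw [← dot_aux]
      conv_lhs => rw [hvw]
      rw [expand_quad]
      have e1 : w ⬝ᵥ (Aᵀ * A).mulVec v₁ = 0 := by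
        rw [hSv, dotProduct_smul, smul_eq_mul, hwv1, mul_zero]
      have e2 : v₁ ⬝ᵥ (Aᵀ * A).mulVec w = 0 := by
        rw [dotProduct_mulVec, ← mulVec_transpose, hSymm, hSv, smul_dotProduct, smul_eq_mul,
          dotProduct_comm, hwv1, mul_zero]
      have e3 : v₁ ⬝ᵥ (Aᵀ * A).mulVec v₁ = σ₁ ^ 2 := by
        rw [hSv, dotProduct_smul, smul_eq_mul, hv, mul_one]
      rw [e1, e2, e3]
      have e4 : w ⬝ᵥ (Aᵀ * A).mulVec w ≤ (σ₁ ^ 2 - δ) * (w ⬝ᵥ w) := hgap w hwv1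
      rw [← ht2] at e4
      nlinarith [sq_nonneg t]
    -- bound on the cross part
    have h2 : |A.mulVec v ⬝ᵥ B.mulVec v - c / 2| ≤ D₀ * t := by
      rw [← dot_aux]
      conv_lhs => rw [hvw]
      rw [expand_quad]
      have eM : v₁ ⬝ᵥ (Aᵀ * B).mulVec v₁ = c / 2 := by
        rw [dot_aux, hAv, smul_dotProduct, smul_eq_mul, hcdef]; ring
      rw [eM]
      set P : ℝ := v₁ ⬝ᵥ (Aᵀ * B).mulVec w with hP
      set Q : ℝ := w ⬝ᵥ (Aᵀ * B).mulVec v₁ with hQ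
      set R : ℝ := w ⬝ᵥ (Aᵀ * B).mulVec w with hR
      have hPb : |P| ≤ C * t := by
        have := bilin_bound (Aᵀ * B) v₁ w 1 t zero_le_one ht0 hv1i hwi
        rw [hCdef]
        simpa using this
      have hQb : |Q| ≤ C * t := by
        have := bilin_bound (Aᵀ * B) w v₁ t 1 ht0 zero_le_one hwi hv1i
        calc |Q| ≤ C * t * 1 := by rw [hCdef]; exact this
          _ = C * t := by ring
      have hRb : |R| ≤ C * t := by
        have := bilin_bound (Aᵀ * B) w w t t ht0 ht0 hwi hwi
        calc |R| ≤ C * t * t := by rw [hCdef]; exact this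
          _ ≤ C * t * 1 := mul_le_mul_of_nonneg_left ht1 (mul_nonneg hC0 ht0)
          _ = C * t := by ring
      have hαP : |α * P| ≤ C * t := by
        rw [abs_mul]
        calc |α| * |P| ≤ 1 * (C * t) := mul_le_mul hαabs hPb (abs_nonneg _) zero_le_one
          _ = C * t := by ring
      have hαQ : |α * Q| ≤ C * t := by
        rw [abs_mul]
        calc |α| * |Q| ≤ 1 * (C * t) := mul_le_mul hαabs hQb (abs_nonneg _) zero_le_one
          _ = C * t := by ring
      have hlast : |α ^ 2 * (c / 2) - c / 2| ≤ |c| / 2 * t := by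
        have e : α ^ 2 * (c / 2) - c / 2 = -(t ^ 2) * (c / 2) := by rw [hα2]; ring
        rw [e, abs_mul, abs_neg]
        rw [abs_of_nonneg (sq_nonneg t : (0:ℝ) ≤ t ^ 2)]
        have : |c / 2| = |c| / 2 := by rw [abs_div]; norm_num
        rw [this]
        nlinarith [mul_le_mul_of_nonneg_left ht1
          (mul_nonneg (div_nonneg (abs_nonneg c) (by norm_num : (0:ℝ) ≤ 2)) ht0)]
      have split : |R + α * P + α * Q + α ^ 2 * (c / 2) - c / 2|
          ≤ |R| + |α * P| + |α * Q| + |α ^ 2 * (c / 2) - c / 2| := by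
        have e : R + α * P + α * Q + α ^ 2 * (c / 2) - c / 2
            = (R + α * P + α * Q) + (α ^ 2 * (c / 2) - c / 2) := by ring
        rw [e]
        calc |(R + α * P + α * Q) + (α ^ 2 * (c / 2) - c / 2)|
            ≤ |R + α * P + α * Q| + |α ^ 2 * (c / 2) - c / 2| := abs_add_le _ _
          _ ≤ (|R + α * P| + |α * Q|) + |α ^ 2 * (c / 2) - c / 2| := by
              have := abs_add_le (R + α * P) (α * Q); linarith
          _ ≤ (|R| + |α * P| + |α * Q|) + |α ^ 2 * (c / 2) - c / 2| := by
              have := abs_add_le R (α * P); linarith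
      rw [hD₀def]
      calc |R + α * P + α * Q + α ^ 2 * (c / 2) - c / 2|
          ≤ |R| + |α * P| + |α * Q| + |α ^ 2 * (c / 2) - c / 2| := split
        _ ≤ C * t + C * t + C * t + |c| / 2 * t := by linarith
        _ = (|c| / 2 + 3 * C) * t := by ring
    have hvi : ∀ i, |v i| ≤ 1 := by
      intro i
      rw [← Real.sqrt_sq_eq_abs]
      rw [show (1 : ℝ) = Real.sqrt 1 by rw [Real.sqrt_one]]
      exact Real.sqrt_le_sqrt (by rw [← hv1]; exact sq_le_dot v i)
    -- bound on the B-part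
    have h3 : |B.mulVec v ⬝ᵥ B.mulVec v| ≤ C₂ := by
      rw [← dot_aux]
      have := bilin_bound (Bᵀ * B) v v 1 1 zero_le_one zero_le_one hvi hvi
      rw [hC₂def]
      simpa using this
    -- combine
    have h2' : 2 * η * (A.mulVec v ⬝ᵥ B.mulVec v) ≤ η * c + 2 * |η| * (D₀ * t) := by
      obtain ⟨hl, hr⟩ := abs_le.mp h2
      rcases le_or_gt 0 η with hh | hh
      · rw [abs_of_nonneg hh]
        have := mul_le_mul_of_nonneg_left hr hh
        nlinarith
      · rw [abs_of_neg hh]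
        have := mul_le_mul_of_nonpos_left hl hh.le
        nlinarith
    have h3' : η ^ 2 * (B.mulVec v ⬝ᵥ B.mulVec v) ≤ C₂ * η ^ 2 := by
      have := (abs_le.mp h3).2
      nlinarith [sq_nonneg η]
    have hAM : 2 * |η| * (D₀ * t) - δ * t ^ 2 ≤ D₀ ^ 2 / δ * η ^ 2 := by
      rw [div_mul_eq_mul_div, le_div_iff₀ hδpos]
      nlinarith [sq_nonneg (δ * t - |η| * D₀), sq_abs η]
    have hKsplit : K * η ^ 2 = D₀ ^ 2 / δ * η ^ 2 + C₂ * η ^ 2 := by rw [hKdef]; ring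
    linarith [h1, h2', h3', hAM, hKsplit]
  -- upper and lower bounds on the sup
  have hvi' : ∀ (v : Fin n → ℝ), v ⬝ᵥ v = 1 → ∀ i, |v i| ≤ 1 := by
    intro v hv1 i
    rw [← Real.sqrt_sq_eq_abs]
    rw [show (1 : ℝ) = Real.sqrt 1 by rw [Real.sqrt_one]]
    exact Real.sqrt_le_sqrt (by rw [← hv1]; exact sq_le_dot v i)
  have hbdd : ∀ η : ℝ, BddAbove (Set.range fun v : { v : Fin n → ℝ // v ⬝ᵥ v = 1 } =>
      (v : Fin n → ℝ) ⬝ᵥ ((A + η • B)ᵀ * (A + η • B)).mulVec (v : Fin n → ℝ)) := by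
    intro η
    refine ⟨σ₁ ^ 2 + η * c + K * η ^ 2, ?_⟩
    rintro x ⟨⟨v0, hv0⟩, rfl⟩
    exact hub η v0 hv0
  have hub' : ∀ η : ℝ, (⨆ v : { v : Fin n → ℝ // v ⬝ᵥ v = 1 },
      (v : Fin n → ℝ) ⬝ᵥ ((A + η • B)ᵀ * (A + η • B)).mulVec (v : Fin n → ℝ))
        ≤ σ₁ ^ 2 + η * c + K * η ^ 2 := by
    intro η
    exact ciSup_le fun ⟨v0, hv0⟩ => hub η v0 hv0
  have hlb : ∀ η : ℝ, σ₁ ^ 2 + η * c ≤ ⨆ v : { v : Fin n → ℝ // v ⬝ᵥ v = 1 },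
      (v : Fin n → ℝ) ⬝ᵥ ((A + η • B)ᵀ * (A + η • B)).mulVec (v : Fin n → ℝ) := by
    intro η
    have step : σ₁ ^ 2 + η * c
        ≤ v₁ ⬝ᵥ ((A + η • B)ᵀ * (A + η • B)).mulVec v₁ := by
      rw [hq, hga1, hhab1]
      nlinarith [sq_nonneg η]
    exact step.trans (le_ciSup (hbdd η) ⟨v₁, hv⟩)
  -- value at 0
  have hF0 : (⨆ v : { v : Fin n → ℝ // v ⬝ᵥ v = 1 },
      (v : Fin n → ℝ) ⬝ᵥ ((A + (0:ℝ) • B)ᵀ * (A + (0:ℝ) • B)).mulVec (v : Fin n → ℝ)) = σ₁ ^ 2 := by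
    simpa using hσ
  -- conclude
  rw [hasDerivAt_iff_isLittleO, Asymptotics.isLittleO_iff]
  intro ε hε
  rw [Metric.eventually_nhds_iff]
  refine ⟨ε / (K + 1), by positivity, fun η hη => ?_⟩
  have hη' : |η| < ε / (K + 1) := by
    simpa [Real.dist_eq] using hη
  have h1 := hlb η
  have h2 := hub' η
  simp only [sub_zero, smul_eq_mul, Real.norm_eq_abs, hF0]
  have habs : |(⨆ v : { v : Fin n → ℝ // v ⬝ᵥ v = 1 },
      (v : Fin n → ℝ) ⬝ᵥ ((A + η • B)ᵀ * (A + η • B)).mulVec (v : Fin n → ℝ))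
        - σ₁ ^ 2 - η * c| ≤ K * η ^ 2 := by
    rw [abs_le]
    constructor
    · linarith [mul_nonneg hK0 (sq_nonneg η)]
    · linarith
  calc |(⨆ v : { v : Fin n → ℝ // v ⬝ᵥ v = 1 },
      (v : Fin n → ℝ) ⬝ᵥ ((A + η • B)ᵀ * (A + η • B)).mulVec (v : Fin n → ℝ))
        - σ₁ ^ 2 - η * c| ≤ K * η ^ 2 := habs
    _ ≤ ε * |η| := by
        have e : η ^ 2 = |η| * |η| := by rw [← sq_abs]; ring
        rw [e]
        have h3 : K * |η| ≤ K * (ε / (K + 1)) :=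
          mul_le_mul_of_nonneg_left hη'.le hK0
        have h4 : K * (ε / (K + 1)) ≤ ε := by
          rw [mul_div_assoc']
          rw [div_le_iff₀ (by positivity : (0:ℝ) < K + 1)]
          nlinarith
        calc K * (|η| * |η|) = K * |η| * |η| := by ring
          _ ≤ ε * |η| := mul_le_mul_of_nonneg_right (h3.trans h4) (abs_nonneg η)


/-- The largest eigenvalue of a real (symmetric) matrix, via the variational
(Rayleigh quotient) characterization: the supremum of `vᵀ S v` over unit vectors `v`. -/
noncomputable def lambdaMax {n : ℕ} (S : Matrix (Fin n) (Fin n) ℝ) : ℝ :=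
  ⨆ v : { v : Fin n → ℝ // v ⬝ᵥ v = 1 }, (v : Fin n → ℝ) ⬝ᵥ S.mulVec (v : Fin n → ℝ)

/-- If the largest singular value `σ₁` of `A` is simple (strictly greater than the second
singular value), with unit singular vectors `u₁, v₁`, then
`η ↦ λ_max((A + ηB)ᵀ (A + ηB))` is differentiable at `η = 0` with derivative
`2 σ₁ (u₁ᵀ B v₁)`. -/
theorem lambdaMax_gram_hasDerivAt_of_simple_top_singular_value
    {m n : ℕ} (A B : Matrix (Fin m) (Fin n) ℝ) (σ₁ : ℝ)
    (u₁ : Fin m → ℝ) (v₁ : Fin n → ℝ)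
    (hu : u₁ ⬝ᵥ u₁ = 1) (hv : v₁ ⬝ᵥ v₁ = 1)
    (hAv : A.mulVec v₁ = σ₁ • u₁) (hATu : Aᵀ.mulVec u₁ = σ₁ • v₁)
    (hσ : lambdaMax (Aᵀ * A) = σ₁ ^ 2)
    (hH : (Aᵀ * A).IsHermitian)
    (hsimple : ∃ i₀ : Fin n, hH.eigenvalues i₀ = σ₁ ^ 2 ∧
      ∀ i : Fin n, i ≠ i₀ → hH.eigenvalues i < σ₁ ^ 2) :
    HasDerivAt (fun η : ℝ => lambdaMax ((A + η • B)ᵀ * (A + η • B)))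
      (2 * σ₁ * (u₁ ⬝ᵥ B.mulVec v₁)) 0 := by
  exact lambdaMax_gram_hasDerivAt_of_simple_top_singular_value' A B σ₁ u₁ v₁
    hu hv hAv hATu hσ hH hsimple
end

section
/- Let S be a real symmetric n×n matrix whose largest eigenvalue λ₁ is strictly greater than its second-largest eigenvalue, and let v be a unit eigenvector of S for λ₁. Then for any real symmetric n×n matrix T, the function η ↦ λ_max(S + ηT) is differentiable at η = 0 with derivative vᵀ T v; equivalently, λ_max(S + ηT) = λ₁ + η · (vᵀ T v) + o(η) as η → 0. -/
open Matrix

/-! Testing `v` in the Rayleigh quotient gives `λ_max(S + ηT) ≥ λ₁ + η vᵀTv`. Conversely, let `x`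
be a unit vector, `α = v ⬝ x` and `s = √(1 - α²)`. The spectral gap `δ` of `S` gives
`xᵀSx ≤ λ₁ - δ s²`, and splitting `x = αv + (x - αv)` gives `|xᵀTx - vᵀTv| ≤ 4Ks` with
`K = ∑ |Tᵢⱼ|`. Maximising `4K|η|s - δs²` over `s` yields
`xᵀ(S + ηT)x ≤ λ₁ + η vᵀTv + (4K²/δ) η²`, so `λ_max(S + ηT)` is squeezed between two functions
with the same first-order expansion at `0`. -/

namespace Matrix

variable {ι : Type*} [Fintype ι]

lemma abs_apply_le_sqrt_dotProduct_self (x : ι → ℝ) (i : ι) : |x i| ≤ √(x ⬝ᵥ x) := by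
  rw [← Real.sqrt_sq_eq_abs]
  exact Real.sqrt_le_sqrt <| by
    simpa only [dotProduct, sq] using
      Finset.single_le_sum (fun j _ => mul_self_nonneg (x j)) (Finset.mem_univ i)

lemma abs_dotProduct_mulVec_le (T : Matrix ι ι ℝ) (y z : ι → ℝ) :
    |y ⬝ᵥ T *ᵥ z| ≤ (∑ i, ∑ j, |T i j|) * (√(y ⬝ᵥ y) * √(z ⬝ᵥ z)) := by
  calc |y ⬝ᵥ T *ᵥ z| = |∑ i, ∑ j, T i j * (y i * z j)| := by
        simp only [dotProduct, mulVec, Finset.mul_sum]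
        congr 1
        exact Finset.sum_congr rfl fun i _ => Finset.sum_congr rfl fun j _ => by ring
    _ ≤ ∑ i, ∑ j, |T i j * (y i * z j)| :=
        (Finset.abs_sum_le_sum_abs _ _).trans
          (Finset.sum_le_sum fun i _ => Finset.abs_sum_le_sum_abs _ _)
    _ ≤ ∑ i, ∑ j, |T i j| * (√(y ⬝ᵥ y) * √(z ⬝ᵥ z)) := by
        gcongr with i _ j _
        rw [abs_mul, abs_mul]
        gcongr
        exacts [abs_apply_le_sqrt_dotProduct_self y i, abs_apply_le_sqrt_dotProduct_self z j]
    _ = (∑ i, ∑ j, |T i j|) * (√(y ⬝ᵥ y) * √(z ⬝ᵥ z)) := by simp only [Finset.sum_mul]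

lemma sq_dotProduct_le (x y : ι → ℝ) : (x ⬝ᵥ y) ^ 2 ≤ (x ⬝ᵥ x) * (y ⬝ᵥ y) := by
  simpa only [dotProduct, sq] using Finset.sum_mul_sq_le_sq_mul_sq Finset.univ x y

lemma abs_dotProduct_mulVec_sub_le (T : Matrix ι ι ℝ) {v x : ι → ℝ} (hv : v ⬝ᵥ v = 1)
    (hx : x ⬝ᵥ x = 1) :
    |x ⬝ᵥ T *ᵥ x - v ⬝ᵥ T *ᵥ v| ≤ 4 * (∑ i, ∑ j, |T i j|) * √(1 - (v ⬝ᵥ x) ^ 2) := by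
  set K := ∑ i, ∑ j, |T i j|
  set α := v ⬝ᵥ x
  set w := x - α • v
  have hww : w ⬝ᵥ w = 1 - α ^ 2 := by
    simp only [w, sub_dotProduct, dotProduct_sub, smul_dotProduct, dotProduct_smul, smul_eq_mul,
      hx, hv, dotProduct_comm x v]
    ring
  set s := √(1 - α ^ 2)
  have hs : s ^ 2 = 1 - α ^ 2 := Real.sq_sqrt (by nlinarith [sq_dotProduct_le v x])
  have hs0 : 0 ≤ s := Real.sqrt_nonneg _
  have hs1 : s ≤ 1 := by nlinarith
  have hα : |α| ≤ 1 := abs_le.mpr ⟨by nlinarith, by nlinarith⟩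
  have hK : 0 ≤ K := by positivity
  have hexpand : x ⬝ᵥ T *ᵥ x - v ⬝ᵥ T *ᵥ v =
      -s ^ 2 * (v ⬝ᵥ T *ᵥ v) + α * (v ⬝ᵥ T *ᵥ w + w ⬝ᵥ T *ᵥ v) + w ⬝ᵥ T *ᵥ w := by
    have hx_eq : x = α • v + w := by simp [w]
    rw [hs, hx_eq]
    simp only [add_dotProduct, smul_dotProduct, mulVec_add, mulVec_smul, dotProduct_add,
      dotProduct_smul, smul_eq_mul]
    ring
  have hbound (y z : ι → ℝ) := abs_dotProduct_mulVec_le T y z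
  have hv' : √(v ⬝ᵥ v) = 1 := by rw [hv, Real.sqrt_one]
  have hw' : √(w ⬝ᵥ w) = s := by rw [hww]
  calc |x ⬝ᵥ T *ᵥ x - v ⬝ᵥ T *ᵥ v|
      ≤ s ^ 2 * |v ⬝ᵥ T *ᵥ v| + |α| * (|v ⬝ᵥ T *ᵥ w| + |w ⬝ᵥ T *ᵥ v|) + |w ⬝ᵥ T *ᵥ w| := by
        rw [hexpand]
        refine (abs_add_three _ _ _).trans ?_
        rw [abs_mul, abs_mul, abs_neg, abs_of_nonneg (sq_nonneg s)]
        gcongr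
        exact abs_add_le _ _
    _ ≤ s ^ 2 * (K * (1 * 1)) + 1 * (K * (1 * s) + K * (s * 1)) + K * (s * s) := by
        gcongr
        exacts [hv' ▸ hbound v v, hv' ▸ hw' ▸ hbound v w, hv' ▸ hw' ▸ hbound w v,
          hw' ▸ hbound w w]
    _ ≤ 4 * K * s := by nlinarith [mul_nonneg hK hs0]

namespace IsHermitian

variable {S : Matrix ι ι ℝ} (hS : S.IsHermitian)
include hS

lemma dotProduct_mulVec_comm (x y : ι → ℝ) : x ⬝ᵥ S *ᵥ y = S *ᵥ x ⬝ᵥ y := by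
  rw [dotProduct_mulVec, ← vecMul_transpose, (isHermitian_iff_isSymm.mp hS).eq]

variable [DecidableEq ι]

lemma dotProduct_eq_sum_eigenvectorBasis (x y : ι → ℝ) :
    x ⬝ᵥ y = ∑ i, (hS.eigenvectorBasis i ⬝ᵥ x) * (hS.eigenvectorBasis i ⬝ᵥ y) := by
  have h := hS.eigenvectorBasis.sum_inner_mul_inner (WithLp.toLp 2 x) (WithLp.toLp 2 y)
  simp only [EuclideanSpace.inner_eq_star_dotProduct, star_trivial] at h
  rw [dotProduct_comm x y, ← h]
  exact Finset.sum_congr rfl fun i _ => by rw [dotProduct_comm y]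

lemma dotProduct_mulVec_eq_sum_eigenvalues (x y : ι → ℝ) :
    x ⬝ᵥ S *ᵥ y = ∑ i, hS.eigenvalues i *
      ((hS.eigenvectorBasis i ⬝ᵥ x) * (hS.eigenvectorBasis i ⬝ᵥ y)) := by
  rw [hS.dotProduct_eq_sum_eigenvectorBasis x (S *ᵥ y)]
  refine Finset.sum_congr rfl fun i _ => ?_
  rw [hS.dotProduct_mulVec_comm, hS.mulVec_eigenvectorBasis, smul_dotProduct, smul_eq_mul]
  ring

lemma eigenvectorBasis_dotProduct_eq_zero {μ : ℝ} {v : ι → ℝ} (hv : S *ᵥ v = μ • v) {i : ι}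
    (hi : hS.eigenvalues i ≠ μ) : hS.eigenvectorBasis i ⬝ᵥ v = 0 := by
  have h : hS.eigenvalues i * (hS.eigenvectorBasis i ⬝ᵥ v) =
      μ * (hS.eigenvectorBasis i ⬝ᵥ v) := by
    rw [← smul_eq_mul, ← smul_dotProduct, ← hS.mulVec_eigenvectorBasis,
      ← hS.dotProduct_mulVec_comm, hv, dotProduct_smul, smul_eq_mul]
  exact (mul_eq_mul_right_iff.mp h).resolve_left hi

lemma sq_dotProduct_eq_of_eigenvalues_ne {μ : ℝ} {v : ι → ℝ} {i₀ : ι} (hv : v ⬝ᵥ v = 1)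
    (hSv : S *ᵥ v = μ • v) (hne : ∀ i ≠ i₀, hS.eigenvalues i ≠ μ) (x : ι → ℝ) :
    (v ⬝ᵥ x) ^ 2 = (hS.eigenvectorBasis i₀ ⬝ᵥ x) ^ 2 := by
  have hv_coord (y : ι → ℝ) :
      v ⬝ᵥ y = (hS.eigenvectorBasis i₀ ⬝ᵥ v) * (hS.eigenvectorBasis i₀ ⬝ᵥ y) := by
    rw [hS.dotProduct_eq_sum_eigenvectorBasis]
    refine Finset.sum_eq_single i₀ (fun i _ hi => ?_) (by simp)
    rw [hS.eigenvectorBasis_dotProduct_eq_zero hSv (hne i hi), zero_mul]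
  have hunit : (hS.eigenvectorBasis i₀ ⬝ᵥ v) ^ 2 = 1 := by
    rw [sq, ← hv_coord, hv]
  rw [hv_coord, mul_pow, hunit, one_mul]

lemma dotProduct_mulVec_le_of_eigenvalues_le {lam δ : ℝ} {i₀ : ι}
    (h₀ : hS.eigenvalues i₀ ≤ lam) (h : ∀ i ≠ i₀, hS.eigenvalues i ≤ lam - δ) (x : ι → ℝ) :
    x ⬝ᵥ S *ᵥ x ≤ lam * (x ⬝ᵥ x) - δ * (x ⬝ᵥ x - (hS.eigenvectorBasis i₀ ⬝ᵥ x) ^ 2) := by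
  rw [hS.dotProduct_mulVec_eq_sum_eigenvalues, hS.dotProduct_eq_sum_eigenvectorBasis x x]
  set c : ι → ℝ := fun i => hS.eigenvectorBasis i ⬝ᵥ x
  calc ∑ i, hS.eigenvalues i * (c i * c i)
      ≤ ∑ i, (lam - δ + if i = i₀ then δ else 0) * (c i * c i) := by
        refine Finset.sum_le_sum fun i _ => mul_le_mul_of_nonneg_right ?_ (mul_self_nonneg _)
        split_ifs with hi
        · rw [hi]; linarith
        · linarith [h i hi]
    _ = lam * ∑ i, c i * c i - δ * (∑ i, c i * c i - c i₀ ^ 2) := by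
        simp only [add_mul, Finset.sum_add_distrib, ite_mul, zero_mul, Finset.sum_ite_eq',
          Finset.mem_univ, if_true, ← Finset.mul_sum]
        ring

lemma dotProduct_add_smul_mulVec_le {lam δ : ℝ} {i₀ : ι} {v : ι → ℝ} (hδ : 0 < δ)
    (hi₀ : hS.eigenvalues i₀ = lam) (hgap : ∀ i ≠ i₀, hS.eigenvalues i ≤ lam - δ)
    (hv : v ⬝ᵥ v = 1) (hSv : S *ᵥ v = lam • v) (T : Matrix ι ι ℝ) (η : ℝ) {x : ι → ℝ}
    (hx : x ⬝ᵥ x = 1) :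
    x ⬝ᵥ (S + η • T) *ᵥ x ≤
      lam + η * (v ⬝ᵥ T *ᵥ v) + 4 * (∑ i, ∑ j, |T i j|) ^ 2 / δ * η ^ 2 := by
  set K := ∑ i, ∑ j, |T i j|
  set s := √(1 - (v ⬝ᵥ x) ^ 2)
  have hs : s ^ 2 = 1 - (v ⬝ᵥ x) ^ 2 := Real.sq_sqrt (by nlinarith [sq_dotProduct_le v x])
  have hS_le : x ⬝ᵥ S *ᵥ x ≤ lam - δ * s ^ 2 := by
    have hne (i : ι) (hi : i ≠ i₀) : hS.eigenvalues i ≠ lam := by linarith [hgap i hi]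
    have := hS.dotProduct_mulVec_le_of_eigenvalues_le hi₀.le hgap x
    rwa [← hS.sq_dotProduct_eq_of_eigenvalues_ne hv hSv hne, hx, mul_one, ← hs] at this
  have hT_le : η * (x ⬝ᵥ T *ᵥ x - v ⬝ᵥ T *ᵥ v) ≤ |η| * (4 * K * s) := by
    refine (le_abs_self _).trans ?_
    rw [abs_mul]
    exact mul_le_mul_of_nonneg_left (abs_dotProduct_mulVec_sub_le T hv hx) (abs_nonneg η)
  -- `|η| 4K s - δ s² ≤ 4K²η²/δ` is `(2K|η| - δ s)² ≥ 0`.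
  have hamgm : |η| * (4 * K * s) - δ * s ^ 2 ≤ 4 * K ^ 2 / δ * η ^ 2 := by
    rw [div_mul_eq_mul_div, le_div_iff₀ hδ]
    nlinarith [sq_nonneg (2 * K * |η| - δ * s), sq_abs η]
  rw [add_mulVec, dotProduct_add, smul_mulVec, dotProduct_smul, smul_eq_mul]
  linarith

end IsHermitian

end Matrix

lemma exists_pos_forall_le_sub_of_forall_lt {ι : Type*} [Finite ι] {f : ι → ℝ} {a : ℝ}
    (h : ∀ i, f i < a) : ∃ δ > 0, ∀ i, f i ≤ a - δ := by
  rcases isEmpty_or_nonempty ι with hι | hι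
  · exact ⟨1, one_pos, fun i => isEmptyElim i⟩
  · obtain ⟨i₁, hi₁⟩ := Finite.exists_max f
    exact ⟨a - f i₁, sub_pos.mpr (h i₁), fun i => by linarith [hi₁ i]⟩

lemma hasDerivAt_of_abs_sub_sub_le_sq {f : ℝ → ℝ} {f' x C : ℝ}
    (h : ∀ y, |f y - f x - (y - x) * f'| ≤ C * (y - x) ^ 2) : HasDerivAt f f' x := by
  rw [hasDerivAt_iff_isLittleO_nhds_zero]
  refine (Asymptotics.IsBigO.of_bound C (Filter.Eventually.of_forall fun t => ?_)).trans_isLittleO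
    (Asymptotics.isLittleO_pow_id one_lt_two)
  simpa [abs_of_nonneg (sq_nonneg t)] using h (x + t)

section lambdaMax

variable {n : ℕ}

lemma dotProduct_mulVec_le_lambdaMax (M : Matrix (Fin n) (Fin n) ℝ) {v : Fin n → ℝ}
    (hv : v ⬝ᵥ v = 1) : v ⬝ᵥ M *ᵥ v ≤ lambdaMax M := by
  refine le_ciSup (f := fun x : {x : Fin n → ℝ // x ⬝ᵥ x = 1} => (x : Fin n → ℝ) ⬝ᵥ M *ᵥ x)
    ⟨∑ i, ∑ j, |M i j|, ?_⟩ ⟨v, hv⟩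
  rintro _ ⟨x, rfl⟩
  simpa [x.2] using (le_abs_self _).trans (abs_dotProduct_mulVec_le M x x)

lemma lambdaMax_le {M : Matrix (Fin n) (Fin n) ℝ} {B : ℝ} (hn : n ≠ 0)
    (h : ∀ x : Fin n → ℝ, x ⬝ᵥ x = 1 → x ⬝ᵥ M *ᵥ x ≤ B) : lambdaMax M ≤ B :=
  have : Nonempty {x : Fin n → ℝ // x ⬝ᵥ x = 1} := ⟨⟨Pi.single ⟨0, by omega⟩ 1, by simp⟩⟩
  ciSup_le fun x => h x x.2

end lambdaMax

theorem lambdaMax_hasDerivAt_of_simple_top_eigenvalue_general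
    {n : ℕ} (S T : Matrix (Fin n) (Fin n) ℝ)
    (hS : S.IsHermitian) (lam₁ : ℝ)
    (v : Fin n → ℝ) (hv : v ⬝ᵥ v = 1) (hSv : S.mulVec v = lam₁ • v)
    (hsimple : ∃ i₀ : Fin n, hS.eigenvalues i₀ = lam₁ ∧
      ∀ i : Fin n, i ≠ i₀ → hS.eigenvalues i < lam₁) :
    HasDerivAt (fun η : ℝ => lambdaMax (S + η • T)) (v ⬝ᵥ T.mulVec v) 0 := by
  obtain ⟨i₀, hi₀, hlt⟩ := hsimple
  obtain ⟨δ, hδ, hgap⟩ := exists_pos_forall_le_sub_of_forall_lt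
    (f := fun i : {i // i ≠ i₀} => hS.eigenvalues i) fun i => hlt i i.2
  set C := 4 * (∑ i, ∑ j, |T i j|) ^ 2 / δ
  have hlower (η : ℝ) : lam₁ + η * (v ⬝ᵥ T *ᵥ v) ≤ lambdaMax (S + η • T) := by
    simpa [add_mulVec, smul_mulVec, hSv, hv] using dotProduct_mulVec_le_lambdaMax (S + η • T) hv
  have hupper (η : ℝ) : lambdaMax (S + η • T) ≤ lam₁ + η * (v ⬝ᵥ T *ᵥ v) + C * η ^ 2 :=
    lambdaMax_le i₀.pos.ne' fun x hx =>
      hS.dotProduct_add_smul_mulVec_le hδ hi₀ (fun i hi => hgap ⟨i, hi⟩) hv hSv T η hx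
  have h0 : lambdaMax (S + (0 : ℝ) • T) = lam₁ :=
    le_antisymm (by simpa using hupper 0) (by simpa using hlower 0)
  refine hasDerivAt_of_abs_sub_sub_le_sq (C := C) fun η => ?_
  rw [h0, sub_zero, abs_le]
  constructor <;> nlinarith [hlower η, hupper η, sq_nonneg η, show 0 ≤ C by positivity]

/-- If the largest eigenvalue `λ₁` of a real symmetric matrix `S` is simple (strictly greater
than the second-largest eigenvalue), with unit eigenvector `v`, then for any symmetric `T`
the map `η ↦ λ_max(S + ηT)` is differentiable at `η = 0` with derivative `vᵀ T v`. -/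
theorem lambdaMax_hasDerivAt_of_simple_top_eigenvalue
    {n : ℕ} (S T : Matrix (Fin n) (Fin n) ℝ)
    (hS : S.IsHermitian) (hT : T.IsHermitian) (lam₁ : ℝ)
    (v : Fin n → ℝ) (hv : v ⬝ᵥ v = 1) (hSv : S.mulVec v = lam₁ • v)
    (hsimple : ∃ i₀ : Fin n, hS.eigenvalues i₀ = lam₁ ∧
      ∀ i : Fin n, i ≠ i₀ → hS.eigenvalues i < lam₁) :
    HasDerivAt (fun η : ℝ => lambdaMax (S + η • T)) (v ⬝ᵥ T.mulVec v) 0 :=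
  lambdaMax_hasDerivAt_of_simple_top_eigenvalue_general S T hS lam₁ v hv hSv hsimple
end
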